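/- Let (W,S) be a Coxeter system, W₁ and W₂ standard parabolic subgroups, and u, v ∈ W. Then brmin(W₁uW₂) ≤ brmin(W₁vW₂) in the Bruhat order if and only if there exist u′ ∈ W₁uW₂ and v′ ∈ W₁vW₂ with u′ ≤ v′. In particular, if brmin(W₁uW₂) ≤ v′ for some v′ ∈ W₁vW₂, then brmin(W₁uW₂) ≤ v″ for every v″ ∈ W₁vW₂. -/

import Mathlib

/-!
If `m = brmin (W₁ u W₂)`, then `m < s m` for every simple `s ∈ W₁` and `m < m s` for every
simple `s ∈ W₂`. By the lifting property (`u ≤ x` and `u < u s` imply `u ≤ x s`) the set of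
elements above `m` is then stable under multiplication by `W₁` on the left and by `W₂` on the
right, so it contains one element of a double coset only if it contains all of them; both claims
follow, using transitivity for the first.

The lifting property and transitivity come from the equivalence of the subword definition of the
Bruhat order with its chain definition; the proof of that equivalence rests on the strong exchange
condition, obtained from Humphreys' sign representation of `W` on `W × {±1}`.
-/

variable {B W : Type*} [Group W] {M : CoxeterMatrix B}

/-- The (strong) Bruhat order on the Coxeter group `W`: `u ≤ v` if and only if some
reduced word for `v` admits a sublist whose product is `u`. -/
def BruhatLE (cs : CoxeterSystem M W) (u v : W) : Prop :=
  ∃ ω : List B, cs.IsReduced ω ∧ cs.wordProd ω = v ∧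
    ∃ ω' : List B, ω'.Sublist ω ∧ cs.wordProd ω' = u

/-- The strict Bruhat order. -/
def BruhatLT (cs : CoxeterSystem M W) (u v : W) : Prop :=
  BruhatLE cs u v ∧ u ≠ v

/-- `m` is the unique minimal element of `K` in the Bruhat order, i.e. `m ∈ K` and
`m` is Bruhat-below every element of `K`. -/
def IsBrMin (cs : CoxeterSystem M W) (K : Set W) (m : W) : Prop :=
  m ∈ K ∧ ∀ x ∈ K, BruhatLE cs m x

/-- `m` is the unique maximal element of `K` in the Bruhat order, i.e. `m ∈ K` and
`m` is Bruhat-above every element of `K`. -/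
def IsBrMax (cs : CoxeterSystem M W) (K : Set W) (m : W) : Prop :=
  m ∈ K ∧ ∀ x ∈ K, BruhatLE cs x m

/-- A standard parabolic subgroup: a subgroup generated by a subset of the simple
reflections. -/
def IsStdParabolic (cs : CoxeterSystem M W) (P : Subgroup W) : Prop :=
  ∃ X : Set B, P = Subgroup.closure (cs.simple '' X)

/-- The left coset `u•W₁ = {u * b : b ∈ W₁}`. -/
def lCoset (W₁ : Subgroup W) (u : W) : Set W := {x | ∃ b ∈ W₁, x = u * b}

/-- The double coset `W₁ u W₂ = {a * u * b : a ∈ W₁, b ∈ W₂}`. -/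
def dblCoset (W₁ W₂ : Subgroup W) (u : W) : Set W :=
  {x | ∃ a ∈ W₁, ∃ b ∈ W₂, x = a * u * b}
open List

namespace CoxeterSystem

variable (cs : CoxeterSystem M W)

local prefix:100 "s" => cs.simple
local prefix:100 "π" => cs.wordProd
local prefix:100 "ℓ" => cs.length

theorem exists_eraseIdx_of_mem_rightInvSeq {t : W} {ω : List B} (h : t ∈ cs.rightInvSeq ω) :
    ∃ j < ω.length, π ω * t = π (ω.eraseIdx j) := by
  obtain ⟨j, hj, rfl⟩ := List.mem_iff_getElem.mp h
  rw [cs.length_rightInvSeq] at hj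
  refine ⟨j, hj, ?_⟩
  rw [← List.getD_eq_getElem _ 1, cs.wordProd_mul_getD_rightInvSeq]

section Sign

open scoped Classical

noncomputable def invSign (t : W) (ω : List B) : ℤˣ :=
  ((cs.rightInvSeq ω).map fun r => if r = t then -1 else 1).prod

theorem invSign_cons (t : W) (i : B) (ω : List B) :
    cs.invSign t (i :: ω) =
      (if π ω * t * (π ω)⁻¹ = s i then -1 else 1) * cs.invSign t ω := by
  have hconj : (π ω)⁻¹ * s i * π ω = t ↔ π ω * t * (π ω)⁻¹ = s i :=
    ⟨by rintro rfl; group, by rintro h; rw [← h]; group⟩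
  simp only [invSign, rightInvSeq, map_cons, prod_cons, hconj]

theorem mem_rightInvSeq_of_invSign_eq_neg_one {t : W} {ω : List B}
    (h : cs.invSign t ω = -1) : t ∈ cs.rightInvSeq ω := by
  by_contra hmem
  refine absurd h (ne_of_eq_of_ne (prod_eq_one fun x hx => ?_) (by decide))
  obtain ⟨r, hr, rfl⟩ := List.mem_map.mp hx
  exact if_neg (ne_of_mem_of_not_mem hr hmem)

noncomputable def reflPermFun (i : B) (p : W × ℤˣ) : W × ℤˣ :=
  (s i * p.1 * s i, if p.1 = s i then -p.2 else p.2)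

theorem simple_mul_mul_simple_eq_simple_iff (i : B) (x : W) : s i * x * s i = s i ↔ x = s i := by
  constructor
  · intro h
    simpa [mul_assoc, cs.simple_mul_simple_cancel_left] using congrArg (s i * · * s i) h
  · rintro rfl
    rw [cs.simple_mul_simple_self, one_mul]

theorem reflPermFun_involutive (i : B) : Function.Involutive (cs.reflPermFun i) := by
  rintro ⟨x, ε⟩
  by_cases h : x = s i
  · simp [reflPermFun, h, cs.simple_mul_simple_self]
  · have h' := (cs.simple_mul_mul_simple_eq_simple_iff i x).not.mpr h
    simp only [reflPermFun, if_neg h, if_neg h']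
    simp [mul_assoc, cs.simple_mul_simple_cancel_left]

noncomputable def reflPerm (i : B) : Equiv.Perm (W × ℤˣ) := (cs.reflPermFun_involutive i).toPerm

theorem prod_map_reflPerm_apply (ω : List B) (t : W) (ε : ℤˣ) :
    (ω.map cs.reflPerm).prod (t, ε) = (π ω * t * (π ω)⁻¹, cs.invSign t ω * ε) := by
  induction ω with
  | nil => simp [invSign]
  | cons i ω ih =>
    rw [map_cons, prod_cons, Equiv.Perm.mul_apply, ih]
    simp only [reflPerm, Function.Involutive.coe_toPerm, reflPermFun, invSign_cons,
      wordProd_cons, mul_inv_rev, cs.inv_simple]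
    refine Prod.ext (by group) ?_
    split_ifs <;> simp

theorem rightInvSeq_alternatingWord (i i' : B) (k : ℕ) :
    cs.rightInvSeq (alternatingWord i i' k) =
      ((range k).map fun n => (s i' * s i) ^ n * s i').reverse := by
  induction k generalizing i i' with
  | zero => simp [alternatingWord]
  | succ k ih =>
    rw [alternatingWord_succ, rightInvSeq_concat, ih, range_succ_eq_map, map_cons, map_map,
      reverse_cons, concat_eq_append, ← map_reverse, map_map, ← map_reverse]
    congr 3
    · funext n
      simp only [Function.comp_apply, MulAut.conj_apply, cs.inv_simple, Nat.succ_eq_add_one,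
        pow_succ, mul_assoc]
      rw [← mul_assoc, ← mul_pow_mul, mul_assoc]
    · simp

theorem invSign_alternatingWord (i i' : B) (t : W) :
    cs.invSign t (alternatingWord i i' (2 * M i i')) = 1 := by
  rw [invSign, rightInvSeq_alternatingWord, map_reverse, prod_reverse, two_mul, range_add,
    map_append, map_map, map_append, prod_append, map_map, map_map]
  convert Int.units_mul_self _ using 4
  funext n
  simp [pow_add]

theorem wordProd_alternatingWord (i i' : B) : π (alternatingWord i i' (2 * M i i')) = 1 := by
  simp [prod_alternatingWord_eq_mul_pow]

theorem prod_map_alternatingWord {G : Type*} [Monoid G] (f : B → G) (i i' : B) (m : ℕ) :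
    ((alternatingWord i i' (2 * m)).map f).prod = (f i * f i') ^ m := by
  induction m with
  | zero => simp [alternatingWord]
  | succ m ih =>
    rw [mul_add_one, alternatingWord_succ', alternatingWord_succ', if_neg (by simp [parity_simps]),
      if_pos (by simp), map_cons, map_cons, prod_cons, prod_cons, ih, pow_succ', mul_assoc]

theorem isLiftable_reflPerm : M.IsLiftable cs.reflPerm := by
  intro i i'
  rw [← prod_map_alternatingWord]
  ext1 ⟨t, ε⟩
  rw [prod_map_reflPerm_apply, wordProd_alternatingWord, invSign_alternatingWord]
  simp

/-- Humphreys' permutation representation of `W` on `W × ℤˣ` (*Reflection groups and Coxeter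
groups*, §5.8); its existence is what makes `invSign t ω` depend only on `π ω`. -/
noncomputable def reflRep : W →* Equiv.Perm (W × ℤˣ) :=
  cs.lift ⟨cs.reflPerm, cs.isLiftable_reflPerm⟩

theorem reflRep_wordProd_apply (ω : List B) (t : W) (ε : ℤˣ) :
    cs.reflRep (π ω) (t, ε) = (π ω * t * (π ω)⁻¹, cs.invSign t ω * ε) := by
  rw [← prod_map_reflPerm_apply, wordProd, map_list_prod, map_map]
  congr 3
  funext i
  exact cs.lift_apply_simple cs.isLiftable_reflPerm i

theorem reflRep_apply_self {t : W} (ht : cs.IsReflection t) (ε : ℤˣ) :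
    cs.reflRep t (t, ε) = (t, -ε) := by
  obtain ⟨w, i, rfl⟩ := ht
  obtain ⟨ω, rfl⟩ := cs.wordProd_surjective w
  have hsimple : ∀ δ, cs.reflRep (π ω) (s i, δ) = (π ω * s i * (π ω)⁻¹, cs.invSign (s i) ω * δ) :=
    cs.reflRep_wordProd_apply ω (s i)
  have hinv : cs.reflRep (π ω)⁻¹ (π ω * s i * (π ω)⁻¹, ε) = (s i, cs.invSign (s i) ω * ε) := by
    rw [map_inv, Equiv.Perm.inv_eq_iff_eq, hsimple, ← mul_assoc, Int.units_mul_self, one_mul]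
  have hsi : ∀ δ, cs.reflRep (s i) (s i, δ) = (s i, -δ) := by
    intro δ
    rw [← cs.wordProd_singleton, reflRep_wordProd_apply]
    simp [invSign]
  rw [map_mul, map_mul, Equiv.Perm.mul_apply, Equiv.Perm.mul_apply, hinv, hsi, hsimple, mul_neg,
    ← mul_assoc, Int.units_mul_self, one_mul]

theorem invSign_eq_neg_one_of_length_mul_lt {t : W} (ht : cs.IsReflection t) {ω : List B}
    (hlt : ℓ (π ω * t) < ℓ (π ω)) : cs.invSign t ω = -1 := by
  obtain ⟨ω₀, hω₀, hπ⟩ := cs.exists_isReduced (π ω * t)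
  have hsign : cs.invSign t ω₀ = -cs.invSign t ω := by
    have h := congrArg (fun p => (cs.reflRep (π ω) p).2) (cs.reflRep_apply_self ht 1)
    simp only [← Equiv.Perm.mul_apply, ← map_mul, hπ, reflRep_wordProd_apply] at h
    simpa using h
  refine (Int.units_eq_one_or _).resolve_left fun h => ?_
  rw [h] at hsign
  obtain ⟨j, hj, hje⟩ :=
    cs.exists_eraseIdx_of_mem_rightInvSeq (cs.mem_rightInvSeq_of_invSign_eq_neg_one hsign)
  have hω : π ω = π (ω₀.eraseIdx j) := by rw [← hje, ← hπ, mul_assoc, ht.mul_self, mul_one]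
  have hle := cs.length_wordProd_le (ω₀.eraseIdx j)
  rw [← hω, length_eraseIdx_of_lt hj] at hle
  rw [hπ, hω₀.eq] at hlt
  omega

end Sign

/-- The strong exchange condition. -/
theorem exists_eraseIdx_of_length_mul_lt {t : W} (ht : cs.IsReflection t) {ω : List B}
    (hlt : ℓ (π ω * t) < ℓ (π ω)) : ∃ j < ω.length, π ω * t = π (ω.eraseIdx j) :=
  cs.exists_eraseIdx_of_mem_rightInvSeq
    (cs.mem_rightInvSeq_of_invSign_eq_neg_one (cs.invSign_eq_neg_one_of_length_mul_lt ht hlt))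

theorem exists_isReduced_append_singleton {w : W} {i : B} (h : ℓ (w * s i) < ℓ w) :
    ∃ ρ : List B, cs.IsReduced (ρ ++ [i]) ∧ π ρ = w * s i := by
  obtain ⟨ρ, hρ, hπ⟩ := cs.exists_isReduced (w * s i)
  refine ⟨ρ, ?_, hπ.symm⟩
  have hw : π (ρ ++ [i]) = w := by
    rw [wordProd_append, wordProd_singleton, ← hπ, cs.simple_mul_simple_cancel_right]
  rw [IsReduced, hw, length_append, length_singleton, ← hρ.eq, ← hπ]
  have := cs.length_mul_simple w i
  omega

def BruhatStep (u v : W) : Prop := ∃ t, cs.IsReflection t ∧ v = u * t ∧ ℓ u < ℓ v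

def BruhatChain : W → W → Prop := Relation.ReflTransGen cs.BruhatStep

variable {cs}

theorem IsReduced.of_append_left {ω₁ ω₂ : List B} (h : cs.IsReduced (ω₁ ++ ω₂)) :
    cs.IsReduced ω₁ := by
  simpa using h.take ω₁.length

theorem IsReduced.length_lt_mul_simple {ρ : List B} {i : B} (h : cs.IsReduced (ρ ++ [i])) :
    ℓ (π ρ) < ℓ (π ρ * s i) := by
  have h' := h.eq
  rw [wordProd_append, wordProd_singleton, length_append, length_singleton,
    ← (h.of_append_left).eq] at h'
  omega

theorem bruhatStep_mul_simple {w : W} {i : B} (h : ℓ w < ℓ (w * s i)) :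
    cs.BruhatStep w (w * s i) :=
  ⟨s i, cs.isReflection_simple i, rfl, h⟩

theorem BruhatStep.mul_simple_eq {x y : W} (h : cs.BruhatStep x y) {i : B}
    (hlt : ℓ (y * s i) < ℓ (x * s i)) : x * s i = y := by
  obtain ⟨t, ht, rfl, hxy⟩ := h
  have hy : ℓ (x * t * s i) < ℓ (x * t) := by
    have := cs.length_mul_simple x i
    have := cs.length_mul_simple (x * t) i
    omega
  obtain ⟨ρ, hρ, hπ⟩ := cs.exists_isReduced_append_singleton hy
  have hρy : π (ρ ++ [i]) = x * t := by
    rw [wordProd_append, hπ, wordProd_singleton, cs.simple_mul_simple_cancel_right]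
  obtain ⟨j, hj, hx⟩ := cs.exists_eraseIdx_of_length_mul_lt ht (ω := ρ ++ [i])
    (by rwa [hρy, mul_assoc, ht.mul_self, mul_one])
  rw [hρy, mul_assoc, ht.mul_self, mul_one] at hx
  rw [length_append, length_singleton] at hj
  rcases (Nat.lt_succ_iff.mp hj).lt_or_eq with hj | rfl
  · rw [eraseIdx_append_of_lt_length hj, wordProd_append, wordProd_singleton] at hx
    have hxs : x * s i = π (ρ.eraseIdx j) := by rw [hx, cs.simple_mul_simple_cancel_right]
    have hle := cs.length_wordProd_le (ρ.eraseIdx j)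
    rw [← hxs, length_eraseIdx_of_lt hj, ← hρ.of_append_left.eq, hπ] at hle
    omega
  · rw [eraseIdx_append_of_length_le le_rfl, Nat.sub_self, eraseIdx_cons_zero, append_nil,
      hπ] at hx
    conv_lhs => rw [hx]
    exact cs.simple_mul_simple_cancel_right i

theorem BruhatStep.mul_simple {x y : W} (h : cs.BruhatStep x y) (i : B) :
    x * s i = y ∨ cs.BruhatStep (x * s i) (y * s i) := by
  obtain ⟨t, ht, rfl, hlt⟩ := h
  have ht' : cs.IsReflection (s i * t * s i) := by simpa [cs.inv_simple] using ht.conj (s i)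
  have hys : x * t * s i = x * s i * (s i * t * s i) := by
    simp [mul_assoc, cs.simple_mul_simple_cancel_left]
  rcases lt_or_gt_of_ne (ht'.length_mul_left_ne (x * s i)) with hdown | hup
  · exact Or.inl (BruhatStep.mul_simple_eq ⟨t, ht, rfl, hlt⟩ (by rwa [hys]))
  · exact Or.inr ⟨_, ht', hys, by rwa [hys]⟩

theorem BruhatChain.mul_simple {x y : W} (h : cs.BruhatChain x y) (i : B) :
    cs.BruhatChain (x * s i) y ∨ cs.BruhatChain (x * s i) (y * s i) := by
  induction h with
  | refl => exact Or.inr .refl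
  | tail _ hzy ih =>
    rcases ih with h | h
    · exact Or.inl (h.tail hzy)
    · rcases hzy.mul_simple i with heq | hstep
      · exact Or.inl (heq ▸ h)
      · exact Or.inr (h.tail hstep)

theorem BruhatChain.mul_simple_of_length_lt {x y : W} (h : cs.BruhatChain x y) {i : B}
    (hy : ℓ y < ℓ (y * s i)) : cs.BruhatChain (x * s i) (y * s i) :=
  (h.mul_simple i).elim (fun h => h.tail (bruhatStep_mul_simple hy)) id

theorem bruhatChain_wordProd_of_sublist {σ ρ : List B} (hσ : σ <+ ρ) (hρ : cs.IsReduced ρ) :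
    cs.BruhatChain (π σ) (π ρ) := by
  induction ρ using List.reverseRecOn generalizing σ with
  | nil => rw [sublist_nil.mp hσ]; exact .refl
  | append_singleton ρ i ih =>
    have hup := hρ.length_lt_mul_simple
    obtain ⟨σ₁, σ₂, rfl, h₁, h₂⟩ := sublist_append_iff.mp hσ
    rcases sublist_singleton.mp h₂ with rfl | rfl
    · rw [append_nil, wordProd_append, wordProd_singleton]
      exact (ih h₁ hρ.of_append_left).tail (bruhatStep_mul_simple hup)
    · rw [wordProd_append, wordProd_append, wordProd_singleton]
      exact (ih h₁ hρ.of_append_left).mul_simple_of_length_lt hup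

theorem BruhatChain.exists_sublist {u v : W} (h : cs.BruhatChain u v) {ω : List B}
    (hω : π ω = v) : ∃ σ, σ <+ ω ∧ π σ = u := by
  induction h using Relation.ReflTransGen.head_induction_on with
  | refl => exact ⟨ω, Sublist.refl ω, hω⟩
  | @head u w hstep _ ih =>
    obtain ⟨σ, hσ, hπ⟩ := ih
    obtain ⟨t, ht, hw, hlt⟩ := hstep
    have hσt : π σ * t = u := by rw [hπ, hw, mul_assoc, ht.mul_self, mul_one]
    obtain ⟨j, -, hj⟩ := cs.exists_eraseIdx_of_length_mul_lt ht (by rwa [hσt, hπ])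
    exact ⟨σ.eraseIdx j, (eraseIdx_sublist σ j).trans hσ, by rw [← hj, hσt]⟩

theorem bruhatLE_iff_bruhatChain {u v : W} : BruhatLE cs u v ↔ cs.BruhatChain u v := by
  constructor
  · rintro ⟨ω, hω, rfl, σ, hσ, rfl⟩
    exact bruhatChain_wordProd_of_sublist hσ hω
  · intro h
    obtain ⟨ω, hω, rfl⟩ := cs.exists_isReduced v
    obtain ⟨σ, hσ, rfl⟩ := h.exists_sublist rfl
    exact ⟨ω, hω, rfl, σ, hσ, rfl⟩

end CoxeterSystem

namespace BruhatLE

open CoxeterSystem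

variable {cs : CoxeterSystem M W}

local prefix:100 "s" => cs.simple
local prefix:100 "π" => cs.wordProd
local prefix:100 "ℓ" => cs.length

theorem trans {u v w : W} (h₁ : BruhatLE cs u v) (h₂ : BruhatLE cs v w) : BruhatLE cs u w := by
  rw [bruhatLE_iff_bruhatChain] at *
  exact h₁.trans h₂

theorem length_le {u v : W} (h : BruhatLE cs u v) : ℓ u ≤ ℓ v := by
  obtain ⟨ω, hω, rfl, σ, hσ, rfl⟩ := h
  exact (cs.length_wordProd_le σ).trans (hω.eq ▸ hσ.length_le)

theorem inv {u v : W} (h : BruhatLE cs u v) : BruhatLE cs u⁻¹ v⁻¹ := by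
  obtain ⟨ω, hω, rfl, σ, hσ, rfl⟩ := h
  exact ⟨ω.reverse, hω.reverse, cs.wordProd_reverse ω, σ.reverse, hσ.reverse,
    cs.wordProd_reverse σ⟩

/-- The lifting property. -/
theorem mul_simple_of_length_lt {u x : W} (h : BruhatLE cs u x) {i : B}
    (hu : ℓ u < ℓ (u * s i)) : BruhatLE cs u (x * s i) := by
  rcases cs.length_mul_simple x i with hx | hx
  · rw [bruhatLE_iff_bruhatChain] at h ⊢
    exact h.tail (bruhatStep_mul_simple (by omega))
  obtain ⟨ρ, hρ, hπ⟩ := cs.exists_isReduced_append_singleton (by omega : ℓ (x * s i) < ℓ x)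
  have hρx : π (ρ ++ [i]) = x := by
    rw [wordProd_append, hπ, wordProd_singleton, cs.simple_mul_simple_cancel_right]
  obtain ⟨σ, hσ, rfl⟩ := (bruhatLE_iff_bruhatChain.mp h).exists_sublist hρx
  obtain ⟨σ₁, σ₂, rfl, h₁, h₂⟩ := sublist_append_iff.mp hσ
  rcases sublist_singleton.mp h₂ with rfl | rfl
  · exact ⟨ρ, hρ.of_append_left, hπ, σ₁, h₁, by rw [append_nil]⟩
  · rw [wordProd_append, wordProd_singleton] at hu ⊢
    rw [cs.simple_mul_simple_cancel_right] at hu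
    have hle : BruhatLE cs (π σ₁ * s i) (π σ₁) := by
      rw [bruhatLE_iff_bruhatChain]
      exact .single ⟨s i, cs.isReflection_simple i, (cs.simple_mul_simple_cancel_right i).symm, hu⟩
    exact hle.trans ⟨ρ, hρ.of_append_left, hπ, σ₁, h₁, rfl⟩

theorem simple_mul_of_length_lt {u x : W} (h : BruhatLE cs u x) {i : B}
    (hu : ℓ u < ℓ (s i * u)) : BruhatLE cs u (s i * x) := by
  have hu' : ℓ u⁻¹ < ℓ (u⁻¹ * s i) := by
    rwa [← cs.inv_simple, ← mul_inv_rev, cs.length_inv, cs.length_inv]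
  simpa [cs.inv_simple] using (h.inv.mul_simple_of_length_lt hu').inv

theorem mul_right_of_mem_closure {m x g : W} {X : Set B} (h : BruhatLE cs m x)
    (hX : ∀ i ∈ X, ℓ m < ℓ (m * s i)) (hg : g ∈ Subgroup.closure (cs.simple '' X)) :
    BruhatLE cs m (x * g) := by
  induction hg using Subgroup.closure_induction_right with
  | one => simpa using h
  | mul_right y _ z hz ih =>
    obtain ⟨i, hi, rfl⟩ := hz
    rw [← mul_assoc]
    exact ih.mul_simple_of_length_lt (hX i hi)
  | mul_inv_cancel y _ z hz ih =>
    obtain ⟨i, hi, rfl⟩ := hz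
    rw [cs.inv_simple, ← mul_assoc]
    exact ih.mul_simple_of_length_lt (hX i hi)

theorem mul_left_of_mem_closure {m x g : W} {X : Set B} (h : BruhatLE cs m x)
    (hX : ∀ i ∈ X, ℓ m < ℓ (s i * m)) (hg : g ∈ Subgroup.closure (cs.simple '' X)) :
    BruhatLE cs m (g * x) := by
  induction hg using Subgroup.closure_induction_left with
  | one => simpa using h
  | mul_left z hz y _ ih =>
    obtain ⟨i, hi, rfl⟩ := hz
    rw [mul_assoc]
    exact ih.simple_mul_of_length_lt (hX i hi)
  | inv_mul_cancel z hz y _ ih =>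
    obtain ⟨i, hi, rfl⟩ := hz
    rw [cs.inv_simple, mul_assoc]
    exact ih.simple_mul_of_length_lt (hX i hi)

end BruhatLE

theorem mul_mul_mem_dblCoset {W₁ W₂ : Subgroup W} {u x a b : W} (hx : x ∈ dblCoset W₁ W₂ u)
    (ha : a ∈ W₁) (hb : b ∈ W₂) : a * x * b ∈ dblCoset W₁ W₂ u := by
  obtain ⟨a', ha', b', hb', rfl⟩ := hx
  exact ⟨a * a', mul_mem ha ha', b' * b, mul_mem hb' hb, by simp only [mul_assoc]⟩

theorem IsBrMin.bruhatLE_mul_mul {cs : CoxeterSystem M W} {W₁ W₂ : Subgroup W} {u m x a b : W}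
    (hm : IsBrMin cs (dblCoset W₁ W₂ u) m) (h₁ : IsStdParabolic cs W₁)
    (h₂ : IsStdParabolic cs W₂) (hx : BruhatLE cs m x) (ha : a ∈ W₁) (hb : b ∈ W₂) :
    BruhatLE cs m (a * x * b) := by
  obtain ⟨X₁, rfl⟩ := h₁
  obtain ⟨X₂, rfl⟩ := h₂
  have hL : ∀ i ∈ X₁, cs.length m < cs.length (cs.simple i * m) := fun i hi =>
    have hmem := mul_mul_mem_dblCoset hm.1 (Subgroup.subset_closure ⟨i, hi, rfl⟩) (one_mem _)
    (hm.2 _ (by simpa using hmem)).length_le.lt_of_ne (cs.length_simple_mul_ne m i).symm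
  have hR : ∀ i ∈ X₂, cs.length m < cs.length (m * cs.simple i) := fun i hi =>
    have hmem := mul_mul_mem_dblCoset hm.1 (one_mem _) (Subgroup.subset_closure ⟨i, hi, rfl⟩)
    (hm.2 _ (by simpa using hmem)).length_le.lt_of_ne (cs.length_mul_simple_ne m i).symm
  exact (hx.mul_left_of_mem_closure hL ha).mul_right_of_mem_closure hR hb

theorem IsBrMin.bruhatLE_of_mem_dblCoset {cs : CoxeterSystem M W} {W₁ W₂ : Subgroup W}
    {u v m x y : W} (hm : IsBrMin cs (dblCoset W₁ W₂ u) m) (h₁ : IsStdParabolic cs W₁)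
    (h₂ : IsStdParabolic cs W₂) (hx : x ∈ dblCoset W₁ W₂ v) (hmx : BruhatLE cs m x)
    (hy : y ∈ dblCoset W₁ W₂ v) : BruhatLE cs m y := by
  obtain ⟨a, ha, b, hb, rfl⟩ := hx
  obtain ⟨a', ha', b', hb', rfl⟩ := hy
  have h := hm.bruhatLE_mul_mul h₁ h₂ hmx (mul_mem ha' (inv_mem ha)) (mul_mem (inv_mem hb) hb')
  rwa [show a' * a⁻¹ * (a * v * b) * (b⁻¹ * b') = a' * v * b' by group] at h

/-- Given standard parabolic subgroups `W₁, W₂` and `u, v ∈ W`, with `m₁ = brmin(W₁uW₂)`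
and `m₂ = brmin(W₁vW₂)`: one has `m₁ ≤ m₂` if and only if there exist `u' ∈ W₁uW₂` and
`v' ∈ W₁vW₂` with `u' ≤ v'`.  In particular, if `m₁ ≤ v'` for some `v' ∈ W₁vW₂`, then
`m₁ ≤ v''` for every `v'' ∈ W₁vW₂`. -/
theorem stmt_7 (cs : CoxeterSystem M W) (W₁ W₂ : Subgroup W)
    (h₁ : IsStdParabolic cs W₁) (h₂ : IsStdParabolic cs W₂) (u v m₁ m₂ : W)
    (hm₁ : IsBrMin cs (dblCoset W₁ W₂ u) m₁)
    (hm₂ : IsBrMin cs (dblCoset W₁ W₂ v) m₂) :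
    (BruhatLE cs m₁ m₂ ↔
      ∃ u' ∈ dblCoset W₁ W₂ u, ∃ v' ∈ dblCoset W₁ W₂ v, BruhatLE cs u' v') ∧
    ((∃ v' ∈ dblCoset W₁ W₂ v, BruhatLE cs m₁ v') →
      ∀ v'' ∈ dblCoset W₁ W₂ v, BruhatLE cs m₁ v'') := by
  refine ⟨⟨fun h => ⟨m₁, hm₁.1, m₂, hm₂.1, h⟩, ?_⟩, ?_⟩
  · rintro ⟨u', hu', v', hv', h⟩
    exact hm₁.bruhatLE_of_mem_dblCoset h₁ h₂ hv' ((hm₁.2 u' hu').trans h) hm₂.1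
  · rintro ⟨v', hv', h⟩ v'' hv''
    exact hm₁.bruhatLE_of_mem_dblCoset h₁ h₂ hv' h hv''
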